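/- Every Cauchy sequence of Bishop real numbers converges to some Bishop real number (Cauchy completeness of the Bishop reals). -/

import Mathlib

/-- A sequence of rationals indexed by positive naturals is *regular* if
`|x m - x n| ≤ 1/m + 1/n` for all `m n : ℕ+`. -/
def Regular (x : ℕ+ → ℚ) : Prop :=
  ∀ m n : ℕ+, |x m - x n| ≤ 1 / (m : ℚ) + 1 / (n : ℚ)

/-- Bishop equality of regular sequences. -/
def BishopEq (x y : ℕ+ → ℚ) : Prop :=
  ∀ n : ℕ+, |x n - y n| ≤ 2 / (n : ℚ)

/-- Strict order on Bishop reals. -/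
def BLt (x y : ℕ+ → ℚ) : Prop :=
  ∃ n : ℕ+, y n - x n > 1 / (n : ℚ)

/-- Non-strict order on Bishop reals. -/
def BLe (x y : ℕ+ → ℚ) : Prop :=
  ∀ n : ℕ+, y n - x n ≥ -(1 / (n : ℚ))

/-- Addition of Bishop reals: `(x + y) n = x (2n) + y (2n)`. -/
def bAdd (x y : ℕ+ → ℚ) : ℕ+ → ℚ := fun n => x (2 * n) + y (2 * n)

/-- Subtraction of Bishop reals. -/
def bSub (x y : ℕ+ → ℚ) : ℕ+ → ℚ := fun n => x (2 * n) - y (2 * n)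

/-- Componentwise negation. -/
def bNeg (x : ℕ+ → ℚ) : ℕ+ → ℚ := fun n => -(x n)

/-- Componentwise maximum. -/
def bMax (x y : ℕ+ → ℚ) : ℕ+ → ℚ := fun n => max (x n) (y n)

/-- Absolute value: `|x| = max {x, -x}`, componentwise `|x| n = |x n|`. -/
def bAbs (x : ℕ+ → ℚ) : ℕ+ → ℚ := fun n => |x n|

/-- Embedding of a rational as the constant regular sequence. -/
def bConst (q : ℚ) : ℕ+ → ℚ := fun _ => q

/-- A Bishop real number: a regular sequence of rationals. -/
structure BReal where
  seq : ℕ+ → ℚ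
  reg : Regular seq

/-- `|x - y| ≤ q` for Bishop reals `x y` and a rational bound `q`. -/
def bDistLe (x y : BReal) (q : ℚ) : Prop :=
  BLe (bAbs (bSub x.seq y.seq)) (bConst q)

/-- A sequence of Bishop reals is Cauchy. -/
def BCauchy (a : ℕ → BReal) : Prop :=
  ∀ k : ℕ+, ∃ N : ℕ, ∀ m n : ℕ, N ≤ m → N ≤ n → bDistLe (a m) (a n) (1 / (k : ℚ))

/-- A sequence of Bishop reals converges to the Bishop real `l`. -/
def BConvergesTo (a : ℕ → BReal) (l : BReal) : Prop :=
  ∀ k : ℕ+, ∃ N : ℕ, ∀ n : ℕ, N ≤ n → bDistLe (a n) l (1 / (k : ℚ))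

/-!
The limit is read off a diagonal: with a monotone Cauchy modulus `M`, take the `2k`-th rational
approximation of the `M (2k)`-th term. All estimates go through one inequality: if `|x - z| ≤ q`
then `|x i - z i'| ≤ 1/i + q + 1/i'` for arbitrary indices `i, i'`, obtained by passing through a
far-out common index and letting it tend to infinity.
-/

lemma le_of_forall_pnat_le_add_div {K : Type*} [Field K] [LinearOrder K] [IsStrictOrderedRing K]
    [Archimedean K] {a b c : K} (h : ∀ n : ℕ+, a ≤ b + c / n) : a ≤ b := by
  refine le_of_forall_pos_lt_add fun ε hε => ?_
  obtain ⟨n, hn⟩ := exists_nat_gt (c / ε)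
  have hc : c / (n.succPNat : K) < ε := by
    rw [Nat.succPNat_coe, Nat.cast_succ, div_lt_iff₀ (by positivity)]
    rw [div_lt_iff₀ hε] at hn
    linarith
  linarith [h n.succPNat]

lemma abs_sub_le_abs_sub_add_abs_sub_add_abs_sub {α : Type*} [AddCommGroup α] [LinearOrder α]
    [IsOrderedAddMonoid α] (p q r s : α) : |p - s| ≤ |p - q| + |q - r| + |r - s| :=
  (abs_sub_le p r s).trans (by gcongr; exact abs_sub_le p q r)

lemma PNat.cast_two_mul (n : ℕ+) : ((2 * n : ℕ+) : ℚ) = 2 * n := by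
  push_cast [PNat.mul_coe]; ring

namespace BReal

lemma abs_seq_sub_le_of_bDistLe {x z : BReal} {q : ℚ} (h : bDistLe x z q) (i i' : ℕ+) :
    |x.seq i - z.seq i'| ≤ 1 / i + q + 1 / i' := by
  refine le_of_forall_pnat_le_add_div (c := 2) fun n => ?_
  have hx := x.reg i (2 * n)
  have hxz : |x.seq (2 * n) - z.seq (2 * n)| ≤ q + 1 / n := by
    have hn := h n
    simp only [bAbs, bSub, bConst] at hn
    linarith
  have hz := z.reg (2 * n) i'
  rw [PNat.cast_two_mul] at hx hz
  have h2n : (2 : ℚ) / n = 1 / (2 * n) + 1 / n + 1 / (2 * n) := by ring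
  linarith [abs_sub_le_abs_sub_add_abs_sub_add_abs_sub (x.seq i) (x.seq (2 * n))
    (z.seq (2 * n)) (z.seq i')]

lemma bDistLe_of_forall_abs_seq_sub_le {x z : BReal} {q : ℚ}
    (h : ∀ n : ℕ+, |x.seq n - z.seq n| ≤ q + 2 / n) : bDistLe x z q := by
  intro n
  have h2n := h (2 * n)
  rw [PNat.cast_two_mul, show (2 : ℚ) / (2 * n) = 1 / n by field_simp] at h2n
  simp only [bAbs, bSub, bConst]
  linarith

end BReal

def IsCauchyModulus (a : ℕ → BReal) (M : ℕ+ → ℕ) : Prop :=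
  ∀ k : ℕ+, ∀ m n : ℕ, M k ≤ m → M k ≤ n → bDistLe (a m) (a n) (1 / (k : ℚ))

lemma BCauchy.exists_monotone_isCauchyModulus {a : ℕ → BReal} (h : BCauchy a) :
    ∃ M : ℕ+ → ℕ, Monotone M ∧ IsCauchyModulus a M := by
  choose N hN using h
  refine ⟨fun k => (Finset.Iic k).sup N,
    fun j k hjk => Finset.sup_mono (Finset.Iic_subset_Iic.2 hjk),
    fun k m n hm hn => hN k m n ?_ ?_⟩ <;>
  exact (Finset.le_sup (Finset.mem_Iic.2 le_rfl)).trans ‹_›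

def diagonalLimit (a : ℕ → BReal) (M : ℕ+ → ℕ) : ℕ+ → ℚ :=
  fun k => (a (M (2 * k))).seq (2 * k)

section diagonalLimit

variable {a : ℕ → BReal} {M : ℕ+ → ℕ} (hmono : Monotone M) (hM : IsCauchyModulus a M)
include hmono hM

lemma regular_diagonalLimit : Regular (diagonalLimit a M) := by
  suffices h : ∀ j k : ℕ+, j ≤ k →
      |diagonalLimit a M j - diagonalLimit a M k| ≤ 1 / (j : ℚ) + 1 / (k : ℚ) by
    intro j k
    rcases le_total j k with hjk | hkj
    · exact h j k hjk
    · rw [abs_sub_comm, add_comm]; exact h k j hkj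
  intro j k hjk
  have hdist := hM (2 * j) (M (2 * j)) (M (2 * k)) le_rfl (hmono (by gcongr))
  have hbound := BReal.abs_seq_sub_le_of_bDistLe hdist (2 * j) (2 * k)
  simp only [PNat.cast_two_mul] at hbound
  have hk : (0 : ℚ) < 1 / (2 * k) := by positivity
  calc _ ≤ _ := hbound
    _ = 1 / (j : ℚ) + 1 / (2 * k) := by ring
    _ ≤ _ := by gcongr; linarith

lemma bConvergesTo_diagonalLimit :
    BConvergesTo a ⟨diagonalLimit a M, regular_diagonalLimit hmono hM⟩ := by
  refine fun k => ⟨M k, fun n hn => BReal.bDistLe_of_forall_abs_seq_sub_le fun i => ?_⟩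
  -- the Cauchy bound at `min k (2i)` covers both `n ≥ M k` and the diagonal index `M (2i)`
  have hdist := hM (min k (2 * i)) n (M (2 * i)) ((hmono (min_le_left _ _)).trans hn)
    (hmono (min_le_right _ _))
  have hmin : (1 : ℚ) / (min k (2 * i) : ℕ+) ≤ 1 / k + 1 / (2 * i) := by
    rcases min_choice k (2 * i) with hs | hs <;> rw [hs]
    · exact le_add_of_nonneg_right (by positivity)
    · rw [PNat.cast_two_mul]; exact le_add_of_nonneg_left (by positivity)
  have hbound := BReal.abs_seq_sub_le_of_bDistLe hdist i (2 * i)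
  rw [PNat.cast_two_mul] at hbound
  have h2i : (2 : ℚ) / i = 1 / i + 1 / (2 * i) + 1 / (2 * i) := by ring
  change |(a n).seq i - (a (M (2 * i))).seq (2 * i)| ≤ _
  linarith

end diagonalLimit

theorem stmt8 (a : ℕ → BReal) (h : BCauchy a) :
    ∃ l : BReal, BConvergesTo a l := by
  obtain ⟨M, hmono, hM⟩ := h.exists_monotone_isCauchyModulus
  exact ⟨_, bConvergesTo_diagonalLimit hmono hM⟩
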